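/- arXiv:2001.02123 — 3 statements merged into one kernel-verified Lean document; each statement's English description precedes it below -/
import Mathlib

section
/- Fix n ≥ 2, γ > 0, and let λ̄(φ) = (φ²+n−1)^(−(γ+1)/2), Λ(φ) = −((γφ² + n−1)/((γ+1)φ²)) λ̄(φ)³. Then for any constant C₁, the function ψ(φ) = λ̄(φ)³ { (1−γ)/(2(1+γ)) + C₁(φ²+n−1) + ((φ²+n−1)/(2(n−1)(γ+1))) (log(φ²) − log(φ²+n−1)) } satisfies −(1+3γ) ψ(φ) − ((n−1)/φ + φ) ψ'(φ) = Λ(φ) for all φ > 0. -/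
theorem stmt_11 (n γ C₁ : ℝ) (hn : 2 ≤ n) (hγ : 0 < γ)
    (lamb Λ ψ : ℝ → ℝ)
    (hlamb : ∀ φ : ℝ, lamb φ = (φ ^ 2 + n - 1) ^ (-(γ + 1) / 2))
    (hΛ : ∀ φ : ℝ, Λ φ = -((γ * φ ^ 2 + n - 1) / ((γ + 1) * φ ^ 2)) * (lamb φ) ^ 3)
    (hψ : ∀ φ : ℝ, ψ φ = (lamb φ) ^ 3 *
      ((1 - γ) / (2 * (1 + γ)) + C₁ * (φ ^ 2 + n - 1)
        + ((φ ^ 2 + n - 1) / (2 * (n - 1) * (γ + 1)))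
            * (Real.log (φ ^ 2) - Real.log (φ ^ 2 + n - 1)))) :
    ∀ φ : ℝ, 0 < φ →
      -(1 + 3 * γ) * ψ φ - ((n - 1) / φ + φ) * deriv ψ φ = Λ φ := by
  intro φ hφ
  have hφ2 : (0:ℝ) < φ ^ 2 := by positivity
  have hn1 : (0:ℝ) < n - 1 := by linarith
  have hu : (0:ℝ) < φ ^ 2 + n - 1 := by nlinarith
  have hγ1 : (0:ℝ) < γ + 1 := by linarith
  set p : ℝ := -(γ + 1) / 2 with hp
  have hg : HasDerivAt (fun x : ℝ => x ^ 2 + n - 1) (2 * φ) φ := by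
    have := ((hasDerivAt_pow 2 φ).add_const n).sub_const 1
    simpa using this
  have hL : HasDerivAt (fun x : ℝ => (x ^ 2 + n - 1) ^ p)
      (2 * φ * p * (φ ^ 2 + n - 1) ^ (p - 1)) φ :=
    hg.rpow_const (Or.inl hu.ne')
  have hcube : HasDerivAt (fun x : ℝ => ((x ^ 2 + n - 1) ^ p) ^ 3)
      (3 * ((φ ^ 2 + n - 1) ^ p) ^ 2 * (2 * φ * p * (φ ^ 2 + n - 1) ^ (p - 1))) φ := by
    exact hL.fun_pow 3
  have hlog1 : HasDerivAt (fun x : ℝ => Real.log (x ^ 2)) (2 * φ / φ ^ 2) φ := by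
    have := (hasDerivAt_pow 2 φ).log hφ2.ne'
    simpa using this
  have hlog2 : HasDerivAt (fun x : ℝ => Real.log (x ^ 2 + n - 1))
      (2 * φ / (φ ^ 2 + n - 1)) φ := hg.log hu.ne'
  have hF : HasDerivAt (fun x : ℝ => (1 - γ) / (2 * (1 + γ)) + C₁ * (x ^ 2 + n - 1)
      + ((x ^ 2 + n - 1) / (2 * (n - 1) * (γ + 1)))
          * (Real.log (x ^ 2) - Real.log (x ^ 2 + n - 1)))
      (C₁ * (2 * φ)
        + ((2 * φ / (2 * (n - 1) * (γ + 1)))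
            * (Real.log (φ ^ 2) - Real.log (φ ^ 2 + n - 1))
          + ((φ ^ 2 + n - 1) / (2 * (n - 1) * (γ + 1)))
            * (2 * φ / φ ^ 2 - 2 * φ / (φ ^ 2 + n - 1)))) φ := by
    have h2 := (hg.const_mul C₁).const_add ((1 - γ) / (2 * (1 + γ)))
    have h3 := (hg.div_const (2 * (n - 1) * (γ + 1))).fun_mul (hlog1.fun_sub hlog2)
    have := h2.fun_add h3
    convert this using 1
  have hψeq : ψ = fun x : ℝ => ((x ^ 2 + n - 1) ^ p) ^ 3 *
      ((1 - γ) / (2 * (1 + γ)) + C₁ * (x ^ 2 + n - 1)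
        + ((x ^ 2 + n - 1) / (2 * (n - 1) * (γ + 1)))
            * (Real.log (x ^ 2) - Real.log (x ^ 2 + n - 1))) := by
    funext x; rw [hψ x, hlamb x]
  have hd : HasDerivAt ψ
      (3 * ((φ ^ 2 + n - 1) ^ p) ^ 2 * (2 * φ * p * (φ ^ 2 + n - 1) ^ (p - 1)) *
        ((1 - γ) / (2 * (1 + γ)) + C₁ * (φ ^ 2 + n - 1)
          + ((φ ^ 2 + n - 1) / (2 * (n - 1) * (γ + 1)))
              * (Real.log (φ ^ 2) - Real.log (φ ^ 2 + n - 1)))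
      + ((φ ^ 2 + n - 1) ^ p) ^ 3 *
        (C₁ * (2 * φ)
          + ((2 * φ / (2 * (n - 1) * (γ + 1)))
              * (Real.log (φ ^ 2) - Real.log (φ ^ 2 + n - 1))
            + ((φ ^ 2 + n - 1) / (2 * (n - 1) * (γ + 1)))
              * (2 * φ / φ ^ 2 - 2 * φ / (φ ^ 2 + n - 1))))) φ := by
    rw [hψeq]; exact hcube.mul hF
  rw [hψ φ, hΛ φ, hlamb φ, hd.deriv, Real.rpow_sub_one hu.ne']
  set L := (φ ^ 2 + n - 1) ^ p with hLdef
  set A := Real.log (φ ^ 2) with hA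
  set B := Real.log (φ ^ 2 + n - 1) with hB
  rw [hp]
  field_simp
  ring
end

section
/- Let P̃ solve P̃''/(1+P̃'²) + (n−1)P̃'/w = 1 with P̃(0) = P̃'(0) = 0 on (0,∞), and suppose P̃' ≥ 0. Then for all w > 0, P̃'(w) ≤ w/(n−1). Consequently P̃(w) ≤ w²/(2(n−1)) for all w ≥ 0. -/
theorem stmt_13 (n : ℕ) (hn : 2 ≤ n) (Ptil : ℝ → ℝ)
    (hP1 : Differentiable ℝ Ptil) (hP2 : Differentiable ℝ (deriv Ptil))
    (hP0 : Ptil 0 = 0) (hP0' : deriv Ptil 0 = 0)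
    (hode : ∀ w : ℝ, 0 < w →
      deriv (deriv Ptil) w / (1 + (deriv Ptil w) ^ 2)
        + ((n : ℝ) - 1) * deriv Ptil w / w = 1)
    (hpos : ∀ w : ℝ, 0 ≤ w → 0 ≤ deriv Ptil w) :
    (∀ w : ℝ, 0 < w → deriv Ptil w ≤ w / ((n : ℝ) - 1)) ∧
    (∀ w : ℝ, 0 ≤ w → Ptil w ≤ w ^ 2 / (2 * ((n : ℝ) - 1))) := by
  have hn1 : (0:ℝ) < (n:ℝ) - 1 := by
    have : (2:ℝ) ≤ (n:ℝ) := by exact_mod_cast hn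
    linarith
  set g : ℝ → ℝ := fun w => ((n:ℝ) - 1) * deriv Ptil w - w with hg
  have hgdiff : Differentiable ℝ g := (hP2.const_mul _).sub differentiable_id
  have hgderiv : ∀ w : ℝ, deriv g w = ((n:ℝ) - 1) * deriv (deriv Ptil) w - 1 := by
    intro w
    exact (((hP2 w).hasDerivAt.const_mul _).sub (hasDerivAt_id w)).deriv
  have hg0 : g 0 = 0 := by simp [hg, hP0']
  have key : ∀ w : ℝ, 0 < w → g w ≤ 0 := by
    intro w₀ hw₀
    by_contra hcon
    push_neg at hcon
    set S : Set ℝ := Set.Icc 0 w₀ ∩ {w | g w ≤ 0} with hS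
    have hScpt : IsCompact S :=
      isCompact_Icc.inter_right (isClosed_le hgdiff.continuous continuous_const)
    have h0S : (0:ℝ) ∈ S := ⟨⟨le_refl 0, hw₀.le⟩, by simp [hg0]⟩
    set s := sSup S with hs
    have hsS : s ∈ S := hScpt.sSup_mem ⟨0, h0S⟩
    have hs0 : 0 ≤ s := hsS.1.1
    have hsw : s ≤ w₀ := hsS.1.2
    have hgs : g s ≤ 0 := hsS.2
    have hslt : s < w₀ := lt_of_le_of_ne hsw (fun h => by rw [h] at hgs; linarith)
    have hgt : ∀ w ∈ Set.Ioc s w₀, 0 < g w := by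
      intro w hw
      by_contra hle
      push_neg at hle
      have hwS : w ∈ S := ⟨⟨le_trans hs0 hw.1.le, hw.2⟩, hle⟩
      exact absurd (le_csSup hScpt.bddAbove hwS) (not_le.mpr hw.1)
    have hanti : StrictAntiOn g (Set.Icc s w₀) := by
      apply strictAntiOn_of_deriv_neg (convex_Icc s w₀) hgdiff.continuous.continuousOn
      intro w hw
      rw [interior_Icc] at hw
      have hwpos : 0 < w := lt_of_le_of_lt hs0 hw.1
      have hgw : 0 < g w := hgt w ⟨hw.1, hw.2.le⟩
      have hodew := hode w hwpos
      have hfrac : (1:ℝ) < ((n:ℝ) - 1) * deriv Ptil w / w := by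
        rw [lt_div_iff₀ hwpos]
        simp only [hg] at hgw
        linarith
      have hsq : (0:ℝ) < 1 + (deriv Ptil w) ^ 2 := by positivity
      have hP'' : deriv (deriv Ptil) w < 0 := by
        have hdn : deriv (deriv Ptil) w / (1 + (deriv Ptil w) ^ 2) < 0 := by linarith
        by_contra h
        push_neg at h
        exact absurd (div_nonneg h hsq.le) (not_le.mpr hdn)
      rw [hgderiv]
      nlinarith
    have hlt := hanti ⟨le_refl s, hsw⟩ ⟨hslt.le, le_refl w₀⟩ hslt
    linarith [hgt w₀ ⟨hslt, le_refl w₀⟩]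
  have part1 : ∀ w : ℝ, 0 < w → deriv Ptil w ≤ w / ((n:ℝ) - 1) := by
    intro w hw
    have hk := key w hw
    rw [le_div_iff₀ hn1]
    simp only [hg] at hk
    linarith
  refine ⟨part1, ?_⟩
  intro w hw
  rcases eq_or_lt_of_le hw with h | h
  · simp [← h, hP0]
  · set F : ℝ → ℝ := fun x => x ^ 2 / (2 * ((n:ℝ) - 1)) - Ptil x with hF
    have hFdiff : Differentiable ℝ F := ((differentiable_pow 2).div_const _).sub hP1
    have hmono : MonotoneOn F (Set.Ici 0) := by
      apply monotoneOn_of_deriv_nonneg (convex_Ici 0) hFdiff.continuous.continuousOn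
        hFdiff.differentiableOn
      intro x hx
      rw [interior_Ici] at hx
      have hd : deriv F x = (2 * x ^ 1) / (2 * ((n:ℝ) - 1)) - deriv Ptil x := by
        exact (((hasDerivAt_pow 2 x).div_const _).sub (hP1 x).hasDerivAt).deriv
      rw [hd]
      have := part1 x hx
      have hx1 : 2 * x ^ 1 / (2 * ((n:ℝ) - 1)) = x / ((n:ℝ) - 1) := by
        field_simp
      rw [hx1]
      linarith
    have hF0 : F 0 = 0 := by simp [hF, hP0]
    have := hmono (Set.self_mem_Ici) (Set.mem_Ici.mpr hw) hw
    rw [hF0] at this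
    simp only [hF] at this
    linarith
end

section
/- Suppose u(x,t) > 0 solves u_t = u_{xx}/(1+u_x²) − (n−1)/u, and define ℜ = −u u_{xx}/(1+u_x²). Then ℜ satisfies the evolution equation ℜ_t = ℜ_{xx}/(1+u_x²) − (2u_x/(u(1+u_x²))) (1−ℜ) ℜ_x + (2u_x²/(u²(1+u_x²))) [ (1−ℜ²) + (n−2)(1−ℜ) ]. -/
noncomputable def DX (g : ℝ × ℝ → ℝ) : ℝ × ℝ → ℝ := fun p => fderiv ℝ g p (1, 0)
noncomputable def DT (g : ℝ × ℝ → ℝ) : ℝ × ℝ → ℝ := fun p => fderiv ℝ g p (0, 1)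

lemma DX.smooth {g : ℝ × ℝ → ℝ} (hg : ContDiff ℝ (⊤ : ℕ∞) g) : ContDiff ℝ (⊤ : ℕ∞) (DX g) :=
  (hg.fderiv_right (by simp)).clm_apply contDiff_const

lemma DT.smooth {g : ℝ × ℝ → ℝ} (hg : ContDiff ℝ (⊤ : ℕ∞) g) : ContDiff ℝ (⊤ : ℕ∞) (DT g) :=
  (hg.fderiv_right (by simp)).clm_apply contDiff_const

lemma slice_x {g : ℝ × ℝ → ℝ} (hg : ContDiff ℝ (⊤ : ℕ∞) g) (x t : ℝ) :
    HasDerivAt (fun x' => g (x', t)) (DX g (x, t)) x := by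
  have h1 : HasDerivAt (fun x' : ℝ => ((x' : ℝ), t)) (((1 : ℝ), (0 : ℝ))) x :=
    (hasDerivAt_id x).prodMk (hasDerivAt_const x t)
  exact ((hg.differentiable (by simp)) (x, t)).hasFDerivAt.comp_hasDerivAt x h1

lemma slice_t {g : ℝ × ℝ → ℝ} (hg : ContDiff ℝ (⊤ : ℕ∞) g) (x t : ℝ) :
    HasDerivAt (fun s => g (x, s)) (DT g (x, t)) t := by
  have h1 : HasDerivAt (fun s : ℝ => ((x : ℝ), (s : ℝ))) (((0 : ℝ), (1 : ℝ))) t :=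
    (hasDerivAt_const t x).prodMk (hasDerivAt_id t)
  exact ((hg.differentiable (by simp)) (x, t)).hasFDerivAt.comp_hasDerivAt t h1

lemma DXDT_comm {g : ℝ × ℝ → ℝ} (hg : ContDiff ℝ (⊤ : ℕ∞) g) (p : ℝ × ℝ) :
    DT (DX g) p = DX (DT g) p := by
  have hdg : Differentiable ℝ g := hg.differentiable (by simp)
  have h2 : ContDiff ℝ (⊤ : ℕ∞) (fderiv ℝ g) := hg.fderiv_right (by simp)
  have h2d : DifferentiableAt ℝ (fderiv ℝ g) p := (h2.differentiable (by simp)) p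
  have hsym := second_derivative_symmetric (f := g) (f' := fderiv ℝ g)
      (f'' := fderiv ℝ (fderiv ℝ g) p) (fun y => (hdg y).hasFDerivAt) h2d.hasFDerivAt
  have hv : ∀ v : ℝ × ℝ, fderiv ℝ (fun q => fderiv ℝ g q v) p =
      (ContinuousLinearMap.apply ℝ ℝ v).comp (fderiv ℝ (fderiv ℝ g) p) :=
    fun v => ((ContinuousLinearMap.apply ℝ ℝ v).hasFDerivAt.comp p h2d.hasFDerivAt).fderiv
  show fderiv ℝ (fun q => fderiv ℝ g q (1,0)) p (0,1) = fderiv ℝ (fun q => fderiv ℝ g q (0,1)) p (1,0)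
  rw [hv, hv]
  exact hsym (0, 1) (1, 0)

set_option maxHeartbeats 4000000 in
theorem stmt_15 (n : ℕ) (hn : 2 ≤ n)
    (u : ℝ → ℝ → ℝ)
    (hsmooth : ContDiff ℝ (⊤ : ℕ∞) (Function.uncurry u))
    (hpos : ∀ x t : ℝ, 0 < u x t)
    (hpde : ∀ x t : ℝ,
      deriv (fun s => u x s) t =
        deriv (deriv (fun x' => u x' t)) x / (1 + (deriv (fun x' => u x' t) x) ^ 2)
          - ((n : ℝ) - 1) / u x t)
    (R : ℝ → ℝ → ℝ)
    (hR : ∀ x t : ℝ, R x t =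
      -(u x t * deriv (deriv (fun x' => u x' t)) x) / (1 + (deriv (fun x' => u x' t) x) ^ 2)) :
    ∀ x t : ℝ,
      deriv (fun s => R x s) t =
        deriv (deriv (fun x' => R x' t)) x / (1 + (deriv (fun x' => u x' t) x) ^ 2)
          - (2 * deriv (fun x' => u x' t) x / (u x t * (1 + (deriv (fun x' => u x' t) x) ^ 2)))
              * (1 - R x t) * deriv (fun x' => R x' t) x
          + (2 * (deriv (fun x' => u x' t) x) ^ 2
                / ((u x t) ^ 2 * (1 + (deriv (fun x' => u x' t) x) ^ 2)))
              * ((1 - (R x t) ^ 2) + ((n : ℝ) - 2) * (1 - R x t)) := by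
  intro x t
  set f : ℝ × ℝ → ℝ := Function.uncurry u with hfdef
  have hfs : ContDiff ℝ (⊤ : ℕ∞) f := hsmooth
  have hF1 : ContDiff ℝ (⊤ : ℕ∞) (DX f) := DX.smooth hfs
  have hF2 : ContDiff ℝ (⊤ : ℕ∞) (DX (DX f)) := DX.smooth hF1
  have hF3 : ContDiff ℝ (⊤ : ℕ∞) (DX (DX (DX f))) := DX.smooth hF2
  have hT0 : ContDiff ℝ (⊤ : ℕ∞) (DT f) := DT.smooth hfs
  have hT1 : ContDiff ℝ (⊤ : ℕ∞) (DX (DT f)) := DX.smooth hT0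
  -- identifications of goal derivatives with DX/DT
  have hD1 : ∀ x' s : ℝ, deriv (fun y => u y s) x' = DX f (x', s) :=
    fun x' s => (slice_x hfs x' s).deriv
  have hD2 : ∀ s : ℝ, deriv (fun y => u y s) = fun x' => DX f (x', s) :=
    fun s => funext fun x' => hD1 x' s
  have hD3 : ∀ x' s : ℝ, deriv (deriv (fun y => u y s)) x' = DX (DX f) (x', s) := by
    intro x' s
    rw [hD2 s]
    exact (slice_x hF1 x' s).deriv
  have hPDE : ∀ x' s : ℝ, DT f (x', s) =
      DX (DX f) (x', s) / (1 + (DX f (x', s)) ^ 2) - ((n : ℝ) - 1) / f (x', s) := by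
    intro x' s
    have h := hpde x' s
    have hl : deriv (fun s' => u x' s') s = DT f (x', s) := (slice_t hfs x' s).deriv
    rw [hD1 x' s, hD3 x' s, hl] at h
    exact h
  -- nonvanishing
  have hgne : ∀ y : ℝ, f (y, t) ≠ 0 := fun y => (hpos y t).ne'
  have hden : ∀ y : ℝ, (1 : ℝ) + DX f (y, t) ^ 2 ≠ 0 := fun y => by positivity
  -- one-variable x-direction derivative facts
  have hd0 : ∀ y : ℝ, HasDerivAt (fun y' => f (y', t)) (DX f (y, t)) y :=
    fun y => slice_x hfs y t
  have hd1 : ∀ y : ℝ, HasDerivAt (fun y' => DX f (y', t)) (DX (DX f) (y, t)) y :=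
    fun y => slice_x hF1 y t
  have hd2 : ∀ y : ℝ, HasDerivAt (fun y' => DX (DX f) (y', t)) (DX (DX (DX f)) (y, t)) y :=
    fun y => slice_x hF2 y t
  have hd3 : ∀ y : ℝ, HasDerivAt (fun y' => DX (DX (DX f)) (y', t)) (DX (DX (DX (DX f))) (y, t)) y :=
    fun y => slice_x hF3 y t
  -- the one-variable functions r (= R(·,t)), q (= u_t(·,t)) and their derivatives
  set r : ℝ → ℝ := fun y => -(f (y, t) * DX (DX f) (y, t)) / (1 + DX f (y, t) ^ 2) with hrdef
  set r1 : ℝ → ℝ := fun y =>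
    ((-(DX f (y, t) * DX (DX f) (y, t) + f (y, t) * DX (DX (DX f)) (y, t)))
        * (1 + DX f (y, t) ^ 2)
      + f (y, t) * DX (DX f) (y, t) * (2 * DX f (y, t) * DX (DX f) (y, t)))
      / (1 + DX f (y, t) ^ 2) ^ 2 with hr1def
  have hr1 : ∀ y : ℝ, HasDerivAt r (r1 y) y := by
    intro y
    have H := (((hd0 y).mul (hd2 y)).neg.div
      ((hasDerivAt_const y (1 : ℝ)).add ((hd1 y).fun_pow 2)) (hden y))
    exact H.congr_deriv (by rw [hr1def]; simp only [Pi.add_apply, Pi.mul_apply, Pi.neg_apply, Pi.pow_apply, Pi.sub_apply, Pi.div_apply]; field_simp; try ring)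
  have hderiv_r : deriv r = r1 := funext fun y => (hr1 y).deriv
  set q : ℝ → ℝ := fun y =>
    DX (DX f) (y, t) / (1 + DX f (y, t) ^ 2) - ((n : ℝ) - 1) / f (y, t) with hqdef
  set q1 : ℝ → ℝ := fun y =>
    (DX (DX (DX f)) (y, t) * (1 + DX f (y, t) ^ 2)
        - 2 * DX f (y, t) * DX (DX f) (y, t) ^ 2) / (1 + DX f (y, t) ^ 2) ^ 2
      + ((n : ℝ) - 1) * DX f (y, t) / f (y, t) ^ 2 with hq1def
  have hq1 : ∀ y : ℝ, HasDerivAt q (q1 y) y := by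
    intro y
    have H := (((hd2 y).div ((hasDerivAt_const y (1 : ℝ)).add ((hd1 y).fun_pow 2)) (hden y)).sub
      ((hasDerivAt_const y ((n : ℝ) - 1)).div (hd0 y) (hgne y)))
    exact H.congr_deriv (by rw [hq1def]; simp only [Pi.add_apply, Pi.mul_apply, Pi.neg_apply, Pi.pow_apply, Pi.sub_apply, Pi.div_apply]; field_simp; try ring)
  have hderiv_q : deriv q = q1 := funext fun y => (hq1 y).deriv
  have hqfun : (fun x' => DT f (x', t)) = q := funext fun y => hPDE y t
  -- second x-derivatives of r and q at x
  have hr2 : HasDerivAt r1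
      (-(DX (DX f) (x, t) ^ 2 + 2 * DX f (x, t) * DX (DX (DX f)) (x, t)
            + f (x, t) * DX (DX (DX (DX f))) (x, t)) / (1 + DX f (x, t) ^ 2)
        + (DX f (x, t) * DX (DX f) (x, t) + f (x, t) * DX (DX (DX f)) (x, t))
            * (2 * DX f (x, t) * DX (DX f) (x, t)) / (1 + DX f (x, t) ^ 2) ^ 2
        + 2 * (DX f (x, t) ^ 2 * DX (DX f) (x, t) ^ 2 + f (x, t) * DX (DX f) (x, t) ^ 3
            + 2 * f (x, t) * DX f (x, t) * DX (DX f) (x, t) * DX (DX (DX f)) (x, t))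
            / (1 + DX f (x, t) ^ 2) ^ 2
        - 2 * f (x, t) * DX f (x, t) * DX (DX f) (x, t) ^ 2 * (2 * (1 + DX f (x, t) ^ 2))
            * (2 * DX f (x, t) * DX (DX f) (x, t)) / (1 + DX f (x, t) ^ 2) ^ 4) x := by
    have den' := (hasDerivAt_const x (1 : ℝ)).add ((hd1 x).fun_pow 2)
    have combN := ((((hd1 x).mul (hd2 x)).add ((hd0 x).mul (hd3 x))).neg.mul den').add
      ((((hd0 x).mul (hd2 x))).mul (((hasDerivAt_const x (2 : ℝ)).mul (hd1 x)).mul (hd2 x)))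
    have H := combN.div (den'.fun_pow 2) (pow_ne_zero 2 (hden x))
    rw [hr1def]
    exact H.congr_deriv (by simp only [Pi.add_apply, Pi.mul_apply, Pi.neg_apply, Pi.pow_apply, Pi.sub_apply, Pi.div_apply]; field_simp; try ring)
  have hq2 : HasDerivAt q1
      (DX (DX (DX (DX f))) (x, t) / (1 + DX f (x, t) ^ 2)
        - 2 * DX f (x, t) * DX (DX f) (x, t) * DX (DX (DX f)) (x, t) / (1 + DX f (x, t) ^ 2) ^ 2
        - (2 * (DX (DX f) (x, t) ^ 3 + 2 * DX f (x, t) * DX (DX f) (x, t) * DX (DX (DX f)) (x, t))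
              * (1 + DX f (x, t) ^ 2) ^ 2
            - 4 * DX f (x, t) * DX (DX f) (x, t) ^ 2 * (1 + DX f (x, t) ^ 2)
              * (2 * DX f (x, t) * DX (DX f) (x, t))) / (1 + DX f (x, t) ^ 2) ^ 4
        + ((n : ℝ) - 1) * (DX (DX f) (x, t) * f (x, t) ^ 2
            - 2 * f (x, t) * DX f (x, t) ^ 2) / f (x, t) ^ 4) x := by
    have den' := (hasDerivAt_const x (1 : ℝ)).add ((hd1 x).fun_pow 2)
    have combN1 := ((hd3 x).mul den').sub
      (((hasDerivAt_const x (2 : ℝ)).mul (hd1 x)).mul ((hd2 x).fun_pow 2))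
    have term1 := combN1.div (den'.fun_pow 2) (pow_ne_zero 2 (hden x))
    have term2 := ((hasDerivAt_const x ((n : ℝ) - 1)).mul (hd1 x)).div
      ((hd0 x).fun_pow 2) (pow_ne_zero 2 (hgne x))
    have H := term1.add term2
    rw [hq1def]
    exact H.congr_deriv (by have := hgne x; simp only [Pi.add_apply, Pi.mul_apply, Pi.neg_apply, Pi.pow_apply, Pi.sub_apply, Pi.div_apply]; field_simp; try ring)
  -- time direction
  have hA : HasDerivAt (fun s => f (x, s)) (q x) t :=
    (slice_t hfs x t).congr_deriv (hPDE x t)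
  have eB : DT (DX f) (x, t) = q1 x := by
    rw [DXDT_comm hfs (x, t), ← (slice_x hT0 x t).deriv, hqfun, hderiv_q]
  have hB : HasDerivAt (fun s => DX f (x, s)) (q1 x) t :=
    (slice_t hF1 x t).congr_deriv eB
  have hTXfun : DT (DX f) = DX (DT f) := funext (DXDT_comm hfs)
  have hfun2 : (fun x' => DX (DT f) (x', t)) = q1 := by
    funext y
    rw [← (slice_x hT0 y t).deriv, hqfun, hderiv_q]
  have eC : DT (DX (DX f)) (x, t) = deriv q1 x := by
    rw [DXDT_comm hF1 (x, t), hTXfun, ← (slice_x hT1 x t).deriv, hfun2]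
  have hC : HasDerivAt (fun s => DX (DX f) (x, s)) (deriv q1 x) t :=
    (slice_t hF2 x t).congr_deriv eC
  have hLHS : HasDerivAt (fun s => -(f (x, s) * DX (DX f) (x, s)) / (1 + DX f (x, s) ^ 2))
      ((-(q x * DX (DX f) (x, t) + f (x, t) * deriv q1 x) * (1 + DX f (x, t) ^ 2)
        + f (x, t) * DX (DX f) (x, t) * (2 * DX f (x, t) * q1 x))
        / (1 + DX f (x, t) ^ 2) ^ 2) t := by
    have H := ((hA.mul hC).neg.div ((hasDerivAt_const t (1 : ℝ)).add (hB.fun_pow 2)) (hden x))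
    exact H.congr_deriv (by simp only [Pi.add_apply, Pi.mul_apply, Pi.neg_apply, Pi.pow_apply, Pi.sub_apply, Pi.div_apply]; field_simp; try ring)
  have hAfun : (fun s => R x s) = fun s => -(f (x, s) * DX (DX f) (x, s)) / (1 + DX f (x, s) ^ 2) := by
    funext s
    rw [hR x s, hD1 x s, hD3 x s]
    rfl
  have hrfun : (fun x' => R x' t) = r := by
    funext y
    rw [hR y t, hD1 y t, hD3 y t, hrdef]
    rfl
  have hu : u x t = f (x, t) := rfl
  rw [hAfun, hLHS.deriv, hrfun, hderiv_r, hr2.deriv, hR x t, hD1 x t, hD3 x t, hu, hq2.deriv]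
  simp only [hqdef, hq1def, hr1def]
  have H1 : f (x, t) ≠ 0 := hgne x
  have H2 : (1 : ℝ) + DX f (x, t) ^ 2 ≠ 0 := hden x
  field_simp
  ring
end
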